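/- Let (V,d) be a finite metric space and F, F* ⊆ V nonempty. Let φ : V → F and φ* : V → F* be closest-facility assignments, set A_j = d(j,F), O_j = d(j,F*), N(R) = φ^{-1}(R), N*(G) = (φ*)^{-1}(G), and let η : F* → F be a nearest-facility map. Let t ≥ 1 be an integer, and suppose R_i ⊆ F and F*_i ⊆ F* satisfy |R_i| = |F*_i| = s > t, and let R̂_i ⊆ R_i with |R̂_i| = s − 1 such that η^{-1}(r) = ∅ for every r ∈ R̂_i. Then (1/(s−1)) · Σ_{(f*,r) ∈ F*_i × R̂_i} [kmed((F \ {r}) ∪ {f*}) − kmed(F)] ≤ Σ_{j ∈ N*(F*_i)} (O_j − A_j) + 2(1 + 1/t)·Σ_{j ∈ N(R_i)} O_j. -/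

import Mathlib

open Finset

/-!
Swapping a degree-0 facility `r` (no `f* ∈ F*` has `η f* = r`) for `f*` costs each client `j` at
most `O_j - A_j` if `φ* j = f*`, and at most `2 O_j` if `φ j = r` otherwise: such a client can go
to `η (φ* j)`, which stays open, at distance `≤ O_j + d(φ* j, φ j) ≤ 2 O_j + A_j`. Summing over the
`s (s - 1)` swaps, every client of `N*(F*_i)` is counted `s - 1` times and every client of
`N(R̂_i) ⊆ N(R_i)` at most `s` times, and `s / (s - 1) ≤ 1 + 1 / t` because `s - 1 ≥ t`.
-/

/-- Distance from a client `j` to a nonempty facility set `F`: `min_{f ∈ F} d(j,f)`. -/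
noncomputable def distSet {V : Type*} [MetricSpace V] (j : V) (F : Finset V)
    (hF : F.Nonempty) : ℝ :=
  F.inf' hF fun f => dist j f

/-- The k-median cost of a nonempty facility set `F`: `∑_{j ∈ V} d(j,F)`. -/
noncomputable def kmed {V : Type*} [MetricSpace V] [Fintype V] (F : Finset V)
    (hF : F.Nonempty) : ℝ :=
  ∑ j : V, distSet j F hF

section Swap

variable {V : Type*} [MetricSpace V]

lemma distSet_le_dist {j f : V} {F : Finset V} (hF : F.Nonempty) (hf : f ∈ F) :
    distSet j F hF ≤ dist j f :=
  inf'_le _ hf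

lemma distSet_nonneg (j : V) (F : Finset V) (hF : F.Nonempty) : 0 ≤ distSet j F hF :=
  le_inf' hF _ fun _ _ => dist_nonneg

variable [DecidableEq V] {F Fstar : Finset V} {hF : F.Nonempty} {hFstar : Fstar.Nonempty}
  {φ φstar η : V → V}

lemma distSet_swap_sub_le
    (hφ : ∀ j : V, φ j ∈ F ∧ dist j (φ j) = distSet j F hF)
    (hφstar : ∀ j : V, φstar j ∈ Fstar ∧ dist j (φstar j) = distSet j Fstar hFstar)
    (hη : ∀ g ∈ Fstar, η g ∈ F ∧ ∀ f ∈ F, dist g (η g) ≤ dist g f)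
    {g r : V} (hr : ∀ g ∈ Fstar, η g ≠ r) (j : V) :
    distSet j (insert g (F.erase r)) (insert_nonempty _ _) - distSet j F hF ≤
      (if φstar j = g then distSet j Fstar hFstar - distSet j F hF else 0)
        + (if φ j = r then 2 * distSet j Fstar hFstar else 0) := by
  have hO := (hφstar j).2
  have hA := (hφ j).2
  have hOnn := distSet_nonneg j Fstar hFstar
  by_cases hg : φstar j = g
  · have : distSet j (insert g (F.erase r)) (insert_nonempty _ _) ≤ distSet j Fstar hFstar :=
      hO ▸ hg ▸ distSet_le_dist _ (mem_insert_self _ _)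
    split_ifs <;> linarith
  by_cases hrj : φ j = r
  · set g' := φstar j
    have hg' : g' ∈ Fstar := (hφstar j).1
    have hηg' : η g' ∈ insert g (F.erase r) :=
      mem_insert_of_mem (mem_erase.2 ⟨hr g' hg', (hη g' hg').1⟩)
    have : distSet j (insert g (F.erase r)) (insert_nonempty _ _) ≤
        2 * distSet j Fstar hFstar + distSet j F hF :=
      calc _ ≤ dist j (η g') := distSet_le_dist _ hηg'
        _ ≤ dist j g' + dist g' (η g') := dist_triangle _ _ _
        _ ≤ dist j g' + dist g' (φ j) := by gcongr; exact (hη g' hg').2 _ (hφ j).1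
        _ ≤ dist j g' + (dist g' j + dist j (φ j)) := by gcongr; exact dist_triangle _ _ _
        _ = _ := by rw [dist_comm g' j, hO, hA]; ring
    simp only [hg, hrj, if_false, if_true]
    linarith
  · have : distSet j (insert g (F.erase r)) (insert_nonempty _ _) ≤ distSet j F hF :=
      hA ▸ distSet_le_dist _ (mem_insert_of_mem (mem_erase.2 ⟨hrj, (hφ j).1⟩))
    simp only [hg, hrj, if_false]
    linarith

lemma kmed_swap_sub_le [Fintype V]
    (hφ : ∀ j : V, φ j ∈ F ∧ dist j (φ j) = distSet j F hF)
    (hφstar : ∀ j : V, φstar j ∈ Fstar ∧ dist j (φstar j) = distSet j Fstar hFstar)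
    (hη : ∀ g ∈ Fstar, η g ∈ F ∧ ∀ f ∈ F, dist g (η g) ≤ dist g f)
    {g r : V} (hr : ∀ g ∈ Fstar, η g ≠ r) :
    kmed (insert g (F.erase r)) (insert_nonempty _ _) - kmed F hF ≤
      ∑ j : V, ((if φstar j = g then distSet j Fstar hFstar - distSet j F hF else 0)
        + (if φ j = r then 2 * distSet j Fstar hFstar else 0)) := by
  rw [kmed, kmed, ← sum_sub_distrib]
  exact sum_le_sum fun j _ => distSet_swap_sub_le hφ hφstar hη hr j

end Swap

lemma sum_sum_sum_ite_eq_add {ι α β M : Type*} [Fintype ι] [DecidableEq α] [DecidableEq β]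
    [AddCommMonoid M] (S : Finset α) (T : Finset β) (u : ι → α) (v : ι → β) (a b : ι → M) :
    ∑ g ∈ S, ∑ r ∈ T, ∑ j, ((if u j = g then a j else 0) + (if v j = r then b j else 0)) =
      #T • ∑ j ∈ univ.filter (fun j => u j ∈ S), a j
        + #S • ∑ j ∈ univ.filter (fun j => v j ∈ T), b j := by
  simp only [sum_add_distrib, sum_const, sum_comm (s := T) (t := univ),
    sum_comm (s := S) (t := univ), sum_ite_eq, sum_filter, smul_sum, smul_ite, smul_zero]

lemma one_div_sub_one_mul_le {s t : ℕ} (ht : 1 ≤ t) (hst : t < s) {x y z : ℝ} (hy : 0 ≤ y)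
    (hz : z ≤ ((s : ℝ) - 1) * x + s * y) :
    1 / ((s : ℝ) - 1) * z ≤ x + (1 + 1 / (t : ℝ)) * y := by
  have ht0 : (0 : ℝ) < t := by exact_mod_cast ht
  have hts : (t : ℝ) ≤ s - 1 := by
    have : (t : ℝ) + 1 ≤ s := by exact_mod_cast hst
    linarith
  have hs : (0 : ℝ) < s - 1 := ht0.trans_le hts
  calc 1 / ((s : ℝ) - 1) * z ≤ 1 / ((s : ℝ) - 1) * (((s : ℝ) - 1) * x + s * y) := by gcongr
    _ = x + (1 + 1 / ((s : ℝ) - 1)) * y := by field_simp; ring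
    _ ≤ x + (1 + 1 / (t : ℝ)) * y := by gcongr

theorem kmed_large_block_swap_bound_general {V : Type*} [MetricSpace V] [Fintype V] [DecidableEq V]
    (F Fstar : Finset V) (hF : F.Nonempty) (hFstar : Fstar.Nonempty)
    (φ φstar η : V → V)
    (hφ : ∀ j : V, φ j ∈ F ∧ dist j (φ j) = distSet j F hF)
    (hφstar : ∀ j : V, φstar j ∈ Fstar ∧ dist j (φstar j) = distSet j Fstar hFstar)
    (hη : ∀ g ∈ Fstar, η g ∈ F ∧ ∀ f ∈ F, dist g (η g) ≤ dist g f)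
    (t : ℕ) (ht : 1 ≤ t) (s : ℕ) (hst : t < s)
    (Ri : Finset V)
    (Fsi : Finset V) (hFsicard : Fsi.card = s)
    (Rhat : Finset V) (hRhat : Rhat ⊆ Ri) (hRhatcard : Rhat.card = s - 1)
    (hdeg0 : ∀ r ∈ Rhat, ∀ g ∈ Fstar, η g ≠ r) :
    (1 / ((s : ℝ) - 1)) *
        ∑ p ∈ Fsi ×ˢ Rhat,
          (kmed (insert p.1 (F.erase p.2)) (insert_nonempty _ _) - kmed F hF) ≤
      (∑ j ∈ univ.filter (fun j => φstar j ∈ Fsi),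
        (distSet j Fstar hFstar - distSet j F hF))
      + 2 * (1 + 1 / (t : ℝ)) *
          ∑ j ∈ univ.filter (fun j => φ j ∈ Ri), distSet j Fstar hFstar := by
  have hO : ∀ j, 0 ≤ distSet j Fstar hFstar := fun j => distSet_nonneg j Fstar hFstar
  have hswaps : ∑ p ∈ Fsi ×ˢ Rhat,
      (kmed (insert p.1 (F.erase p.2)) (insert_nonempty _ _) - kmed F hF) ≤
      ((s : ℝ) - 1) * ∑ j ∈ univ.filter (fun j => φstar j ∈ Fsi),
          (distSet j Fstar hFstar - distSet j F hF)
        + s * (2 * ∑ j ∈ univ.filter (fun j => φ j ∈ Ri), distSet j Fstar hFstar) := by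
    rw [sum_product]
    calc _ ≤ _ := sum_le_sum fun g _ => sum_le_sum fun r hr =>
          kmed_swap_sub_le hφ hφstar hη (hdeg0 r hr)
      _ = _ := sum_sum_sum_ite_eq_add _ _ _ _ _ _
      _ ≤ _ := by
        rw [hRhatcard, hFsicard, nsmul_eq_mul, nsmul_eq_mul, ← mul_sum,
          Nat.cast_sub (by omega : 1 ≤ s), Nat.cast_one]
        gcongr
        exact fun j _ _ => hO j
  refine (one_div_sub_one_mul_le ht hst ?_ hswaps).trans_eq (by ring)
  exact mul_nonneg zero_le_two (sum_nonneg fun j _ => hO j)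

/-- Averaged bound over the single swaps `F*_i × R̂_i` in a large block
(`|R_i| = |F*_i| = s > t`), where `R̂_i` consists of `s - 1` degree-0 elements
of `R_i`. -/
theorem kmed_large_block_swap_bound {V : Type*} [MetricSpace V] [Fintype V] [DecidableEq V]
    (F Fstar : Finset V) (hF : F.Nonempty) (hFstar : Fstar.Nonempty)
    (φ φstar η : V → V)
    (hφ : ∀ j : V, φ j ∈ F ∧ dist j (φ j) = distSet j F hF)
    (hφstar : ∀ j : V, φstar j ∈ Fstar ∧ dist j (φstar j) = distSet j Fstar hFstar)
    (hη : ∀ g ∈ Fstar, η g ∈ F ∧ ∀ f ∈ F, dist g (η g) ≤ dist g f)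
    (t : ℕ) (ht : 1 ≤ t) (s : ℕ) (hst : t < s)
    (Ri : Finset V) (hRi : Ri ⊆ F) (hRicard : Ri.card = s)
    (Fsi : Finset V) (hFsi : Fsi ⊆ Fstar) (hFsicard : Fsi.card = s)
    (Rhat : Finset V) (hRhat : Rhat ⊆ Ri) (hRhatcard : Rhat.card = s - 1)
    (hdeg0 : ∀ r ∈ Rhat, ∀ g ∈ Fstar, η g ≠ r) :
    (1 / ((s : ℝ) - 1)) *
        ∑ p ∈ Fsi ×ˢ Rhat,
          (kmed (insert p.1 (F.erase p.2)) (insert_nonempty _ _) - kmed F hF) ≤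
      (∑ j ∈ univ.filter (fun j => φstar j ∈ Fsi),
        (distSet j Fstar hFstar - distSet j F hF))
      + 2 * (1 + 1 / (t : ℝ)) *
          ∑ j ∈ univ.filter (fun j => φ j ∈ Ri), distSet j Fstar hFstar :=
  kmed_large_block_swap_bound_general F Fstar hF hFstar φ φstar η hφ hφstar hη t ht s hst Ri Fsi
    hFsicard Rhat hRhat hRhatcard hdeg0
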